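/- arXiv:1208.5552 — 3 statements merged into one kernel-verified Lean document; each statement's English description precedes it below -/
import Mathlib

section
/- For every δ > 0, T > 0 and ε > 0, the probability P( max_{1 ≤ k ≤ ⌊nT⌋} | n^{-1/2} Σ_{i=1}^{k} ( 1_{γ^n_i ≤ δ/√n} − F^n(δ/√n) ) | > ε ) tends to 0 as n → ∞. Equivalently, defining L̃^n_δ(t) = n^{-1/2} Σ_{i=1}^{⌊nt⌋} ( 1_{γ^n_i ≤ δ/√n} − F^n(δ/√n) ), one has sup_{0 ≤ t ≤ T} |L̃^n_δ(t)| → 0 in probability as n → ∞. -/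
/-! The summands `1_{γᵢ ≤ c} − p` are bounded below by `−p`, so over `B` steps the partial sums
`S k` decrease by at most `B p`, and `|S k| ≤ max |S a| |S b| + B p` for the neighbouring points
`a ≤ k ≤ b` of a grid of mesh `B`. With `N = ⌊nT⌋`, `m` fixed and `B ≈ N / m`, the bound
`√n p ≤ f δ + 1` makes `B p ≤ ε√n / 2`, so the maximum of `|S k|` exceeds `ε√n` only if one of the
`m + 1` grid values exceeds `ε√n / 2`. The variance of a sum of at most `N` independent indicators
of probability `p` is at most `N p`, so by Chebyshev each grid event has probability at most
`4 N p / (ε² n) = O(1 / √n)`. -/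

open MeasureTheory ProbabilityTheory Filter Finset

lemma Real.exists_lt_of_lt_biSup {ι : Type*} {s : Finset ι} {g : ι → ℝ} {ε : ℝ} (hε : 0 ≤ ε)
    (h : ε < ⨆ k ∈ s, g k) : ∃ k ∈ s, ε < g k := by
  by_contra! hg
  exact h.not_ge (Real.iSup_le (fun k => Real.iSup_le (hg k) hε) hε)

section PartialSums

variable {Y : ℕ → ℝ} {p : ℝ}

lemma sum_Icc_sub_mul_le_sum_Icc (hY : ∀ i, -p ≤ Y i) {u v : ℕ} (huv : u ≤ v) :
    ∑ i ∈ Icc 1 u, Y i - (v - u : ℕ) * p ≤ ∑ i ∈ Icc 1 v, Y i := by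
  have hsub : Icc 1 u ⊆ Icc 1 v := Icc_subset_Icc_right huv
  have hcard : #(Icc 1 v \ Icc 1 u) = v - u := by
    rw [card_sdiff_of_subset hsub, Nat.card_Icc, Nat.card_Icc]; omega
  have hincr := card_nsmul_le_sum (Icc 1 v \ Icc 1 u) Y (-p) fun i _ => hY i
  rw [hcard, nsmul_eq_mul] at hincr
  rw [← sum_sdiff hsub]
  linarith

lemma exists_abs_sum_Icc_le_grid (hp : 0 ≤ p) (hY : ∀ i, -p ≤ Y i) {m B N k : ℕ}
    (hNB : N < m * B) (hk : k ≤ N) :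
    ∃ j ∈ range (m + 1),
      |∑ i ∈ Icc 1 k, Y i| ≤ |∑ i ∈ Icc 1 (min (j * B) N), Y i| + B * p := by
  have hB : 0 < B := Nat.pos_of_ne_zero (by rintro rfl; simp at hNB)
  set j := k / B
  have hjk : j * B ≤ k := Nat.div_mul_le_self k B
  have hkj : k < j * B + B := (Nat.lt_mul_div_succ k hB).trans_eq (by ring)
  have hjm : j < m := (Nat.div_lt_iff_lt_mul hB).2 (hk.trans_lt hNB)
  have hkb : k ≤ min ((j + 1) * B) N := le_min (by linarith) hk
  have hlower := sum_Icc_sub_mul_le_sum_Icc hY hjk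
  have hupper := sum_Icc_sub_mul_le_sum_Icc hY hkb
  have hgap₁ : ((k - j * B : ℕ) : ℝ) * p ≤ B * p := by gcongr; omega
  have hgap₂ : ((min ((j + 1) * B) N - k : ℕ) : ℝ) * p ≤ B * p := by
    gcongr; rw [add_mul, one_mul]; omega
  rcases le_total 0 (∑ i ∈ Icc 1 k, Y i) with h | h
  · refine ⟨j + 1, by simpa using hjm, ?_⟩
    rw [abs_of_nonneg h]
    linarith [le_abs_self (∑ i ∈ Icc 1 (min ((j + 1) * B) N), Y i)]
  · refine ⟨j, by simp; omega, ?_⟩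
    rw [abs_of_nonpos h, min_eq_left (hjk.trans hk)]
    linarith [neg_abs_le (∑ i ∈ Icc 1 (j * B), Y i)]

end PartialSums

section IndicatorSums

variable {Ω : Type*} [MeasurableSpace Ω] {P : Measure Ω} [IsProbabilityMeasure P]
  {γ : ℕ → Ω → ℝ} {c p : ℝ}

lemma measure_le_abs_sum_indicator_sub_le (hmeas : ∀ i, Measurable (γ i))
    (hindep : iIndepFun γ P) (hp : ∀ i, P.real {ω | γ i ω ≤ c} = p) (s : Finset ℕ) {a : ℝ}
    (ha : 0 < a) :
    P {ω | a ≤ |∑ i ∈ s, ((if γ i ω ≤ c then 1 else 0) - p)|} ≤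
      ENNReal.ofReal (#s * p / a ^ 2) := by
  set X : ℕ → Ω → ℝ := fun i => {ω | γ i ω ≤ c}.indicator 1
  have hXmeas : ∀ i, Measurable (X i) := fun i =>
    measurable_one.indicator (hmeas i measurableSet_Iic)
  have hXbdd : ∀ i, ∀ᵐ ω ∂P, X i ω ∈ Set.Icc (0 : ℝ) 1 := fun i => ae_of_all _ fun ω => by
    simp only [X, Set.indicator_apply]; split_ifs <;> simp
  have hXmem : ∀ i, MemLp (X i) 2 P := fun i =>
    memLp_of_bounded (hXbdd i) (hXmeas i).aestronglyMeasurable 2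
  have hEX : ∀ i, P[X i] = p := fun i =>
    (integral_indicator_one (hmeas i measurableSet_Iic)).trans (hp i)
  have hES : P[∑ i ∈ s, X i] = #s * p := by
    rw [sum_fn, integral_finsetSum s fun i _ => (hXmem i).integrable one_le_two]
    simp [hEX]
  have hVar : Var[∑ i ∈ s, X i; P] ≤ #s * p := by
    have hpair : Set.Pairwise ↑s fun i j => X i ⟂ᵢ[P] X j := fun i _ j _ hij =>
      (hindep.indepFun hij).comp (measurable_one.indicator measurableSet_Iic)
        (measurable_one.indicator measurableSet_Iic)
    rw [IndepFun.variance_sum (fun i _ => hXmem i) hpair]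
    calc ∑ i ∈ s, Var[X i; P] ≤ ∑ _i ∈ s, p := sum_le_sum fun i _ => by
          have := variance_le_sub_mul_sub (hXbdd i) (hXmeas i).aemeasurable
          rw [hEX] at this
          nlinarith [sq_nonneg p]
      _ = #s * p := by simp
  have hcheb := meas_ge_le_variance_div_sq (memLp_finsetSum' s fun i _ => hXmem i) ha
  rw [hES] at hcheb
  have hset : {ω | a ≤ |∑ i ∈ s, ((if γ i ω ≤ c then 1 else 0) - p)|} =
      {ω | a ≤ |(∑ i ∈ s, X i) ω - #s * p|} := by
    ext ω
    simp [X, Set.indicator_apply, sum_sub_distrib]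
  rw [hset]
  exact hcheb.trans (ENNReal.ofReal_le_ofReal (by gcongr))

lemma measure_exists_lt_abs_sum_indicator_sub_le (hmeas : ∀ i, Measurable (γ i))
    (hindep : iIndepFun γ P) (hp : ∀ i, P.real {ω | γ i ω ≤ c} = p) {m B N : ℕ}
    (hNB : N < m * B) {x : ℝ} (hx : 0 < x) (hBp : 2 * B * p ≤ x) :
    P {ω | ∃ k ≤ N, x < |∑ i ∈ Icc 1 k, ((if γ i ω ≤ c then 1 else 0) - p)|} ≤
      (m + 1) * ENNReal.ofReal (4 * N * p / x ^ 2) := by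
  have hp0 : 0 ≤ p := hp 0 ▸ measureReal_nonneg
  set G : ℕ → Set Ω := fun j =>
    {ω | x / 2 ≤ |∑ i ∈ Icc 1 (min (j * B) N), ((if γ i ω ≤ c then 1 else 0) - p)|}
  have hcover : {ω | ∃ k ≤ N, x < |∑ i ∈ Icc 1 k, ((if γ i ω ≤ c then 1 else 0) - p)|} ⊆
      ⋃ j ∈ range (m + 1), G j := by
    rintro ω ⟨k, hk, hlt⟩
    have hY : ∀ i, -p ≤ (if γ i ω ≤ c then 1 else 0) - p := fun i => by split_ifs <;> linarith
    obtain ⟨j, hj, hle⟩ := exists_abs_sum_Icc_le_grid hp0 hY hNB hk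
    exact Set.mem_biUnion hj (by simp only [G, Set.mem_ofPred_eq]; linarith)
  have hG : ∀ j, P (G j) ≤ ENNReal.ofReal (4 * N * p / x ^ 2) := fun j => by
    refine (measure_le_abs_sum_indicator_sub_le hmeas hindep hp _ (half_pos hx)).trans
      (ENNReal.ofReal_le_ofReal ?_)
    have hcard : (#(Icc 1 (min (j * B) N)) : ℝ) ≤ N := by simp
    calc (#(Icc 1 (min (j * B) N)) : ℝ) * p / (x / 2) ^ 2 ≤ N * p / (x / 2) ^ 2 := by gcongr
      _ = 4 * N * p / x ^ 2 := by ring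
  calc _ ≤ P (⋃ j ∈ range (m + 1), G j) := measure_mono hcover
    _ ≤ ∑ j ∈ range (m + 1), P (G j) := measure_biUnion_finset_le _ _
    _ ≤ ∑ _j ∈ range (m + 1), ENNReal.ofReal (4 * N * p / x ^ 2) := sum_le_sum fun j _ => hG j
    _ = (m + 1) * ENNReal.ofReal (4 * N * p / x ^ 2) := by simp

lemma measure_exists_lt_sqrt_mul_abs_sum_indicator_sub_le (hmeas : ∀ i, Measurable (γ i))
    (hindep : iIndepFun γ P) (hp : ∀ i, P.real {ω | γ i ω ≤ c} = p) {n m : ℕ} {T ε C : ℝ}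
    (hT : 0 ≤ T) (hε : 0 < ε) (hm0 : 0 < m) (hm : 4 * T * C ≤ ε * m) (hpC : √n * p ≤ C)
    (hεn : 4 ≤ ε * √n) :
    P {ω | ∃ k ≤ ⌊n * T⌋₊, ε * √n < |∑ i ∈ Icc 1 k, ((if γ i ω ≤ c then 1 else 0) - p)|} ≤
      (m + 1) * ENNReal.ofReal (4 * T * C / (ε ^ 2 * √n)) := by
  set N := ⌊(n : ℝ) * T⌋₊
  have hsqrt : 0 < √(n : ℝ) := pos_of_mul_pos_right (by linarith) hε.le
  have hp0 : 0 ≤ p := hp 0 ▸ measureReal_nonneg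
  have hp1 : p ≤ 1 := hp 0 ▸ measureReal_le_one
  have hNp : N * p ≤ T * C * √n := by
    calc N * p ≤ n * T * p := by gcongr; exact Nat.floor_le (by positivity)
      _ = T * √n * (√n * p) := by
        linear_combination (T * p) * (Real.mul_self_sqrt n.cast_nonneg).symm
      _ ≤ T * √n * C := by gcongr
      _ = T * C * √n := by ring
  -- grid of mesh `B = N / m + 1`
  refine (measure_exists_lt_abs_sum_indicator_sub_le hmeas hindep hp
    (Nat.lt_mul_div_succ N hm0) (by positivity) ?_).trans ?_
  · have hstep : ((N / m : ℕ) : ℝ) * p ≤ ε * √n / 4 := by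
      calc ((N / m : ℕ) : ℝ) * p ≤ N / m * p := by gcongr; exact Nat.cast_div_le
        _ = N * p / m := by ring
        _ ≤ T * C * √n / m := by gcongr
        _ ≤ ε * √n / 4 := by
          rw [div_le_div_iff₀ (by positivity) (by norm_num)]; nlinarith
    push_cast
    nlinarith
  · gcongr _ * ENNReal.ofReal ?_
    rw [div_le_div_iff₀ (by positivity) (by positivity), mul_pow, Real.sq_sqrt n.cast_nonneg]
    calc 4 * N * p * (ε ^ 2 * √n) = 4 * ε ^ 2 * √n * (N * p) := by ring
      _ ≤ 4 * ε ^ 2 * √n * (T * C * √n) := by gcongr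
      _ = 4 * T * C * (ε ^ 2 * n) := by
        linear_combination (4 * ε ^ 2 * T * C) * Real.mul_self_sqrt n.cast_nonneg

end IndicatorSums

theorem stmt_0_general
    {Ω : Type*} [MeasurableSpace Ω] (P : Measure Ω) [IsProbabilityMeasure P]
    (γ : ℕ → ℕ → Ω → ℝ)
    (hmeas : ∀ n i, Measurable (γ n i))
    (hindep : ∀ n, iIndepFun (γ n) P)
    (F : ℕ → ℝ → ℝ)
    (hF : ∀ n i x, F n x = (P {ω | γ n i ω ≤ x}).toReal)
    (f : ℝ → ℝ)
    (hconv : ∀ x, 0 ≤ x →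
      Tendsto (fun n : ℕ => Real.sqrt n * F n (x / Real.sqrt n)) atTop (nhds (f x)))
    (δ T ε : ℝ) (hδ : 0 < δ) (hT : 0 < T) (hε : 0 < ε) :
    Tendsto (fun n : ℕ =>
        P {ω | ε < ⨆ k ∈ Finset.Icc 1 ⌊(n : ℝ) * T⌋₊,
          |(1 / Real.sqrt n) * ∑ i ∈ Finset.Icc 1 k,
            ((if γ n i ω ≤ δ / Real.sqrt n then (1 : ℝ) else 0)
              - F n (δ / Real.sqrt n))|})
      atTop (nhds (0 : ENNReal)) := by
  set C := f δ + 1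
  set m : ℕ := ⌈4 * T * C / ε⌉₊ + 1
  have hm : 4 * T * C ≤ ε * m := by
    rw [← div_le_iff₀' hε]
    exact (Nat.le_ceil _).trans (by simp [m])
  have hsqrt : Tendsto (fun n : ℕ => √(n : ℝ)) atTop atTop :=
    Real.tendsto_sqrt_atTop.comp tendsto_natCast_atTop_atTop
  have hbound : Tendsto (fun n : ℕ => ((m : ENNReal) + 1) *
      ENNReal.ofReal (4 * T * C / (ε ^ 2 * √n))) atTop (nhds 0) := by
    have h := ENNReal.tendsto_ofReal
      (tendsto_const_nhds.div_atTop (hsqrt.const_mul_atTop (pow_pos hε 2)) (a := 4 * T * C))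
    simpa using ENNReal.Tendsto.const_mul h (Or.inr (by simp))
  refine tendsto_of_tendsto_of_tendsto_of_le_of_le' tendsto_const_nhds hbound
    (.of_forall fun _ => zero_le) ?_
  filter_upwards [(hconv δ hδ.le).eventually_le_const (lt_add_one _),
    (hsqrt.const_mul_atTop hε).eventually_ge_atTop 4] with n hpC hεn
  refine le_trans (measure_mono fun ω hω => ?_)
    (measure_exists_lt_sqrt_mul_abs_sum_indicator_sub_le (hmeas n) (hindep n)
      (fun i => by rw [measureReal_def, hF n i]) hT.le hε (Nat.succ_pos _) hm hpC hεn)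
  obtain ⟨k, hk, hlt⟩ := Real.exists_lt_of_lt_biSup hε.le hω
  refine ⟨k, (mem_Icc.1 hk).2, ?_⟩
  have hsqrt_pos : 0 < √(n : ℝ) := pos_of_mul_pos_right (by linarith) hε.le
  rwa [abs_mul, abs_of_pos (one_div_pos.2 hsqrt_pos), one_div, ← div_eq_inv_mul,
    lt_div_iff₀ hsqrt_pos] at hlt

/-- For iid nonnegative random variables `γ n i` with cdf `F n`,
assuming the diffusion scaling `√n · Fⁿ(x/√n) → f(x)` for a nondecreasing, locally
Lipschitz `f`, the running maximum of the centered indicator sums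
`n^{-1/2} Σ_{i=1}^k (1_{γⁿᵢ ≤ δ/√n} − Fⁿ(δ/√n))` over `1 ≤ k ≤ ⌊nT⌋` exceeds `ε`
with probability tending to `0`. -/
theorem stmt_0
    {Ω : Type*} [MeasurableSpace Ω] (P : Measure Ω) [IsProbabilityMeasure P]
    (γ : ℕ → ℕ → Ω → ℝ)
    (hmeas : ∀ n i, Measurable (γ n i))
    (hnonneg : ∀ n i ω, 0 ≤ γ n i ω)
    (hindep : ∀ n, iIndepFun (γ n) P)
    (hident : ∀ n i j, IdentDistrib (γ n i) (γ n j) P P)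
    (F : ℕ → ℝ → ℝ)
    (hF : ∀ n i x, F n x = (P {ω | γ n i ω ≤ x}).toReal)
    (f : ℝ → ℝ)
    (hf_mono : MonotoneOn f (Set.Ici 0))
    (hf_lip : ∀ T, 0 ≤ T → ∃ K : NNReal, LipschitzOnWith K f (Set.Icc 0 T))
    (hconv : ∀ x, 0 ≤ x →
      Tendsto (fun n : ℕ => Real.sqrt n * F n (x / Real.sqrt n)) atTop (nhds (f x)))
    (δ T ε : ℝ) (hδ : 0 < δ) (hT : 0 < T) (hε : 0 < ε) :
    Tendsto (fun n : ℕ =>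
        P {ω | ε < ⨆ k ∈ Finset.Icc 1 ⌊(n : ℝ) * T⌋₊,
          |(1 / Real.sqrt n) * ∑ i ∈ Finset.Icc 1 k,
            ((if γ n i ω ≤ δ / Real.sqrt n then (1 : ℝ) else 0)
              - F n (δ / Real.sqrt n))|})
      atTop (nhds (0 : ENNReal)) :=
  stmt_0_general P γ hmeas hindep F hF f hconv δ T ε hδ hT hε
end

section
/- Let c > 0, let g : [0,∞) → ℝ be nondecreasing and Lipschitz continuous with g(0) = 0, and let y : [0,∞) → ℝ be càdlàg. Then there exists a unique càdlàg function x : [0,∞) → ℝ such that for all t ≥ 0, x(t) = y(t) + c ∫_0^t (x(s))⁻ ds − ∫_0^t g((x(s))⁺) ds, where the integrals are Lebesgue integrals. -/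
open Filter MeasureTheory

/-- A function `y : [0,∞) → ℝ` (encoded on all of `ℝ`, with only its values on
`[0,∞)` relevant) is càdlàg: right-continuous at every `t ≥ 0` and with a finite
left limit at every `t > 0`. -/
def Cadlag (y : ℝ → ℝ) : Prop :=
  (∀ t : ℝ, 0 ≤ t → ContinuousWithinAt y (Set.Ici t) t) ∧
  (∀ t : ℝ, 0 < t → ∃ l : ℝ, Tendsto y (nhdsWithin t (Set.Iio t)) (nhds l))

/-! With `f u = c u⁻ - g(u⁺)`, which is Lipschitz, the equation says that `x` is a fixed point on
`[0, ∞)` of the Picard map `P x t = y t + ∫₀ᵗ f (x s) ds`. If `f` is `K`-Lipschitz, a bound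
`|x₁ - x₂| ≤ M (K s)ⁿ / n!` on `[0, t]` improves to `M (K t)ⁿ⁺¹ / (n + 1)!` for `P x₁ - P x₂` at
`t`. Iterating this from the boundedness of càdlàg functions on compacts gives uniqueness, and
shows that the Picard iterates of `y` converge uniformly on every `[0, T]`; the limit is `P y`
plus a continuous function, hence càdlàg, and is a fixed point of `P`. -/

open Set Topology Bornology
open scoped NNReal Nat

theorem continuousOn_Ici_of_forall_Icc {β : Type*} [TopologicalSpace β] {v : ℝ → β} {a : ℝ}
    (h : ∀ T, a ≤ T → ContinuousOn v (Icc a T)) : ContinuousOn v (Ici a) := fun t ht =>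
  (h (t + 1) (by linarith [mem_Ici.1 ht]) t ⟨ht, by linarith⟩).mono_of_mem_nhdsWithin <|
    mem_of_superset (inter_mem_nhdsWithin _ (Iio_mem_nhds (lt_add_one t)))
      fun _ hs => ⟨hs.1, hs.2.le⟩

namespace Cadlag

variable {u v : ℝ → ℝ}

theorem comp {F : ℝ → ℝ} (hF : Continuous F) (hu : Cadlag u) : Cadlag (F ∘ u) :=
  ⟨fun t ht => hF.continuousAt.comp_continuousWithinAt (hu.1 t ht),
    fun t ht =>
      let ⟨l, hl⟩ := hu.2 t ht
      ⟨F l, (hF.tendsto l).comp hl⟩⟩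

theorem add (hu : Cadlag u) (hv : Cadlag v) : Cadlag (u + v) :=
  ⟨fun t ht => (hu.1 t ht).add (hv.1 t ht), fun t ht =>
    let ⟨l, hl⟩ := hu.2 t ht
    let ⟨m, hm⟩ := hv.2 t ht
    ⟨l + m, hl.add hm⟩⟩

theorem of_continuousOn (hv : ContinuousOn v (Ici 0)) : Cadlag v :=
  ⟨fun t ht => (hv t ht).mono fun _ hs => ht.trans hs, fun t ht =>
    ⟨v t, ((hv.continuousAt (Ici_mem_nhds ht)).tendsto).mono_left nhdsWithin_le_nhds⟩⟩

theorem isBounded_image_Icc (hu : Cadlag u) (T : ℝ) : IsBounded (u '' Icc 0 T) := by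
  have near : ∀ {a : ℝ} {l : Filter ℝ}, Tendsto u l (𝓝 a) → ∃ S ∈ l, IsBounded (u '' S) :=
    fun {a} _ h => ⟨_, h (Metric.ball_mem_nhds a one_pos),
      Metric.isBounded_ball.subset (image_preimage_subset _ _)⟩
  refine isCompact_Icc.induction_on (p := fun S => IsBounded (u '' S)) (by simp)
    (fun _ _ hst h => h.subset (image_mono hst))
    (fun _ _ hs ht => by rw [image_union]; exact hs.union ht) fun t ht => ?_
  obtain ⟨R, hR, hRb⟩ := near (hu.1 t ht.1)
  rcases ht.1.eq_or_lt with rfl | htpos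
  · exact ⟨R, nhdsWithin_mono _ (fun s hs => hs.1) hR, hRb⟩
  · obtain ⟨l, hl⟩ := hu.2 t htpos
    obtain ⟨L, hL, hLb⟩ := near hl
    refine ⟨R ∪ L, mem_nhdsWithin_of_mem_nhds ?_, by rw [image_union]; exact hRb.union hLb⟩
    rw [← nhdsWithin_univ, ← Iio_union_Ici, nhdsWithin_union]
    exact ⟨mem_of_superset hL subset_union_right, mem_of_superset hR subset_union_left⟩

theorem exists_bound (hu : Cadlag u) (T : ℝ) : ∃ C, ∀ t ∈ Icc 0 T, |u t| ≤ C := by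
  obtain ⟨C, hC⟩ := (hu.isBounded_image_Icc T).exists_norm_le
  exact ⟨C, fun t ht => hC _ (mem_image_of_mem u ht)⟩

theorem exists_abs_sub_le (hu : Cadlag u) (hv : Cadlag v) (T : ℝ) :
    ∃ M, 0 ≤ M ∧ ∀ t ∈ Icc 0 T, |u t - v t| ≤ M := by
  obtain ⟨C₁, hC₁⟩ := hu.exists_bound T
  obtain ⟨C₂, hC₂⟩ := hv.exists_bound T
  exact ⟨|C₁| + |C₂|, by positivity, fun t ht => (abs_sub _ _).trans
    (add_le_add ((hC₁ t ht).trans (le_abs_self _)) ((hC₂ t ht).trans (le_abs_self _)))⟩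

/-- `u` is arbitrary on `(-∞, 0)`, hence frozen at `0` there; on `[0, ∞)` it is the pointwise
limit of its values at dyadic rationals approaching from the right. -/
theorem measurable_comp_max (hu : Cadlag u) : Measurable fun t => u (max t 0) := by
  set r : ℕ → ℝ → ℝ := fun n s => ⌈s * 2 ^ n⌉ / 2 ^ n
  have hr : ∀ n, Measurable fun t => u (r n (max t 0)) := fun n =>
    (measurable_from_top (f := fun k : ℤ => u (k / 2 ^ n))).comp
      ((measurable_id.max measurable_const).mul_const _).ceil
  refine measurable_of_tendsto_metrizable hr (tendsto_pi_nhds.2 fun t => ?_)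
  set s := max t 0
  have hs : 0 ≤ s := le_max_right t 0
  have lower : ∀ n, s ≤ r n s := fun n => by
    rw [le_div_iff₀ (by positivity)]; exact Int.le_ceil _
  have upper : ∀ n, r n s ≤ s + (1 / 2) ^ n := fun n => by
    rw [div_le_iff₀ (by positivity), add_mul, ← mul_pow, one_div, inv_mul_cancel₀ two_ne_zero,
      one_pow]
    exact (Int.ceil_lt_add_one _).le
  have hlim : Tendsto (fun n => r n s) atTop (𝓝[≥] s) := by
    refine tendsto_nhdsWithin_iff.2 ⟨tendsto_of_tendsto_of_tendsto_of_le_of_le tendsto_const_nhds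
      ?_ lower upper, Eventually.of_forall lower⟩
    simpa using tendsto_const_nhds.add
      (tendsto_pow_atTop_nhds_zero_of_lt_one (by norm_num) (by norm_num : (1 / 2 : ℝ) < 1))
  exact (hu.1 s hs).tendsto.comp hlim

theorem integrableOn_Icc (hu : Cadlag u) (T : ℝ) : IntegrableOn u (Icc 0 T) := by
  obtain ⟨C, hC⟩ := hu.exists_bound T
  refine .of_bound measure_Icc_lt_top ?_ C (ae_restrict_of_forall_mem measurableSet_Icc hC)
  refine hu.measurable_comp_max.aestronglyMeasurable.congr
    (ae_restrict_of_forall_mem measurableSet_Icc fun t ht => ?_)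
  simp only [max_eq_left ht.1]

theorem intervalIntegrable (hu : Cadlag u) {t : ℝ} (ht : 0 ≤ t) :
    IntervalIntegrable u volume 0 t :=
  (intervalIntegrable_iff_integrableOn_Icc_of_le ht).2 (hu.integrableOn_Icc t)

theorem continuousOn_primitive (hu : Cadlag u) :
    ContinuousOn (fun t => ∫ s in (0 : ℝ)..t, u s) (Ici 0) :=
  continuousOn_Ici_of_forall_Icc fun T hT => by
    have h := hu.integrableOn_Icc T
    rw [← uIcc_of_le hT] at h ⊢
    exact intervalIntegral.continuousOn_primitive_interval h

end Cadlag

noncomputable def picardMap (f y x : ℝ → ℝ) (t : ℝ) : ℝ := y t + ∫ s in (0 : ℝ)..t, f (x s)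

section Picard

variable {f y x x₁ x₂ : ℝ → ℝ} {K : ℝ≥0}

theorem Cadlag.picardMap (hf : Continuous f) (hy : Cadlag y) (hx : Cadlag x) :
    Cadlag (_root_.picardMap f y x) :=
  hy.add (.of_continuousOn (hx.comp hf).continuousOn_primitive)

theorem Cadlag.iterate_picardMap (hf : Continuous f) (hy : Cadlag y) (hx : Cadlag x) (n : ℕ) :
    Cadlag ((_root_.picardMap f y)^[n] x) := by
  induction n with
  | zero => exact hx
  | succ n ih => rw [Function.iterate_succ_apply']; exact hy.picardMap hf ih

theorem continuousOn_picardMap_sub (hf : Continuous f) (hx₁ : Cadlag x₁) (hx₂ : Cadlag x₂) :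
    ContinuousOn (fun t => picardMap f y x₁ t - picardMap f y x₂ t) (Ici 0) :=
  ((hx₁.comp hf).continuousOn_primitive.sub (hx₂.comp hf).continuousOn_primitive).congr
    fun _ _ => add_sub_add_left_eq_sub _ _ _

theorem mul_integral_mul_pow_div_factorial (a b t : ℝ) (n : ℕ) :
    b * ∫ s in (0 : ℝ)..t, a * ((b * s) ^ n / n !) = a * ((b * t) ^ (n + 1) / (n + 1)!) := by
  have h (s : ℝ) : a * ((b * s) ^ n / n !) = a * b ^ n / n ! * s ^ n := by ring
  simp_rw [h, intervalIntegral.integral_const_mul, integral_pow, Nat.factorial_succ]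
  push_cast
  field_simp
  ring

theorem abs_picardMap_sub_le (hf : LipschitzWith K f) (hx₁ : Cadlag x₁) (hx₂ : Cadlag x₂)
    {M t : ℝ} {n : ℕ} (ht : 0 ≤ t) (h : ∀ s ∈ Icc 0 t, |x₁ s - x₂ s| ≤ M * ((K * s) ^ n / n !)) :
    |picardMap f y x₁ t - picardMap f y x₂ t| ≤ M * ((K * t) ^ (n + 1) / (n + 1)!) := by
  have hint {x} (hx : Cadlag x) : IntervalIntegrable (fun s => f (x s)) volume 0 t :=
    (hx.comp hf.continuous).intervalIntegrable ht
  calc |picardMap f y x₁ t - picardMap f y x₂ t|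
      = ‖∫ s in (0 : ℝ)..t, (f (x₁ s) - f (x₂ s))‖ := by
        rw [intervalIntegral.integral_sub (hint hx₁) (hint hx₂), Real.norm_eq_abs, picardMap,
          picardMap, add_sub_add_left_eq_sub]
    _ ≤ ∫ s in (0 : ℝ)..t, K * (M * ((K * s) ^ n / n !)) := by
        refine intervalIntegral.norm_integral_le_of_norm_le ht (ae_of_all _ fun s hs => ?_)
          (Continuous.intervalIntegrable (by fun_prop) _ _)
        rw [← dist_eq_norm]
        exact (hf.dist_le_mul _ _).trans
          (mul_le_mul_of_nonneg_left (h s ⟨hs.1.le, hs.2⟩) K.coe_nonneg)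
    _ = M * ((K * t) ^ (n + 1) / (n + 1)!) := by
        rw [intervalIntegral.integral_const_mul, mul_integral_mul_pow_div_factorial]

theorem abs_sub_le_of_eqOn_picardMap (hf : LipschitzWith K f) {a b : ℕ → ℝ → ℝ}
    (ha : ∀ n, Cadlag (a n)) (hb : ∀ n, Cadlag (b n))
    (ha_succ : ∀ n, EqOn (a (n + 1)) (picardMap f y (a n)) (Ici 0))
    (hb_succ : ∀ n, EqOn (b (n + 1)) (picardMap f y (b n)) (Ici 0))
    {M T : ℝ} (h₀ : ∀ t ∈ Icc 0 T, |a 0 t - b 0 t| ≤ M) (n : ℕ) :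
    ∀ t ∈ Icc 0 T, |a n t - b n t| ≤ M * ((K * t) ^ n / n !) := by
  induction n with
  | zero => simpa using h₀
  | succ n ih =>
    intro t ht
    rw [ha_succ n ht.1, hb_succ n ht.1]
    exact abs_picardMap_sub_le hf (ha n) (hb n) ht.1 fun s hs => ih s ⟨hs.1, hs.2.trans ht.2⟩

theorem eqOn_of_eqOn_picardMap (hf : LipschitzWith K f) (hx₁ : Cadlag x₁) (hx₂ : Cadlag x₂)
    (h₁ : EqOn x₁ (picardMap f y x₁) (Ici 0)) (h₂ : EqOn x₂ (picardMap f y x₂) (Ici 0)) :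
    EqOn x₁ x₂ (Ici 0) := by
  intro T hT
  obtain ⟨M, -, hM⟩ := hx₁.exists_abs_sub_le hx₂ T
  have key := abs_sub_le_of_eqOn_picardMap hf (fun _ => hx₁) (fun _ => hx₂) (fun _ => h₁)
    (fun _ => h₂) hM
  have hlim := (FloorSemiring.tendsto_pow_div_factorial_atTop (K * T : ℝ)).const_mul M
  rw [mul_zero] at hlim
  exact sub_eq_zero.1 (abs_nonpos_iff.1 (ge_of_tendsto' hlim fun n => key n T ⟨hT, le_rfl⟩))

theorem exists_summable_bound_iterate_picardMap_sub (hf : LipschitzWith K f) (hy : Cadlag y)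
    (T : ℝ) : ∃ u : ℕ → ℝ, Summable u ∧ ∀ n, ∀ t ∈ Icc 0 T,
      ‖(picardMap f y)^[n + 1] (picardMap f y y) t - (picardMap f y)^[n + 1] y t‖ ≤ u n := by
  set P := picardMap f y
  have hPy : Cadlag (P y) := hy.picardMap hf.continuous hy
  obtain ⟨M, hM0, hM⟩ := hPy.exists_abs_sub_le hy T
  have key := abs_sub_le_of_eqOn_picardMap hf (a := fun n => P^[n] (P y)) (b := fun n => P^[n] y)
    (hy.iterate_picardMap hf.continuous hPy) (hy.iterate_picardMap hf.continuous hy)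
    (fun n t _ => congrFun (Function.iterate_succ_apply' P n (P y)) t)
    (fun n t _ => congrFun (Function.iterate_succ_apply' P n y) t) hM
  refine ⟨fun n => M * ((K * T) ^ (n + 1) / (n + 1)!),
    ((summable_nat_add_iff 1).2 (Real.summable_pow_div_factorial (K * T))).mul_left M,
    fun n t ht => (key (n + 1) t ht).trans ?_⟩
  have := ht.1
  dsimp only
  gcongr
  exact ht.2

theorem tendsto_picardMap_of_tendstoUniformlyOn (hf : LipschitzWith K f)
    {xs : ℕ → ℝ → ℝ} (hxs : ∀ n, Cadlag (xs n)) (hx : Cadlag x) {t : ℝ} (ht : 0 ≤ t)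
    (h : TendstoUniformlyOn xs x atTop (Icc 0 t)) :
    Tendsto (fun n => picardMap f y (xs n) t) atTop (𝓝 (picardMap f y x t)) := by
  rw [Metric.tendsto_nhds]
  intro ε hε
  have hδ : 0 < ε / (K * t + 1) := by positivity
  filter_upwards [Metric.tendstoUniformlyOn_iff.1 h _ hδ] with n hn
  rw [Real.dist_eq]
  calc |picardMap f y (xs n) t - picardMap f y x t|
      ≤ ε / (K * t + 1) * ((K * t) ^ (0 + 1) / (0 + 1)!) :=
        abs_picardMap_sub_le hf (hxs n) hx ht fun s hs => by
          simpa [abs_sub_comm, Real.dist_eq] using (hn s hs).le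
    _ < ε := by
        rw [zero_add, pow_one, Nat.factorial_one, Nat.cast_one, div_one, div_mul_eq_mul_div,
          div_lt_iff₀ (by positivity)]
        nlinarith

theorem exists_cadlag_eqOn_picardMap (hf : LipschitzWith K f) (hy : Cadlag y) :
    ∃ x, Cadlag x ∧ EqOn x (picardMap f y x) (Ici 0) := by
  set P := picardMap f y
  have hP {x} (hx : Cadlag x) (n : ℕ) : Cadlag (P^[n] x) := hy.iterate_picardMap hf.continuous hx n
  have hPy : Cadlag (P y) := hy.picardMap hf.continuous hy
  set D : ℕ → ℝ → ℝ := fun n t => P^[n + 1] (P y) t - P^[n + 1] y t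
  set x : ℝ → ℝ := fun t => P y t + ∑' n, D n t
  have hsum (N : ℕ) (t : ℝ) : P y t + ∑ n ∈ Finset.range N, D n t = P^[N + 1] y t := by
    simp only [D, ← Function.iterate_succ_apply]
    rw [Finset.sum_range_sub (fun n => P^[n + 1] y t)]
    simp
  have hunif (T : ℝ) : TendstoUniformlyOn (fun N => P^[N + 1] y) x atTop (Icc 0 T) := by
    obtain ⟨u, hu, hDu⟩ := exists_summable_bound_iterate_picardMap_sub hf hy T
    refine Metric.tendstoUniformlyOn_iff.2 fun ε hε => ?_
    filter_upwards [Metric.tendstoUniformlyOn_iff.1 (tendstoUniformlyOn_tsum_nat hu hDu) ε hε]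
      with N hN t ht
    rw [← hsum]
    exact (dist_add_left _ _ _).trans_lt (hN t ht)
  have hx : Cadlag x := by
    refine hPy.add (.of_continuousOn (continuousOn_Ici_of_forall_Icc fun T _ => ?_))
    obtain ⟨u, hu, hDu⟩ := exists_summable_bound_iterate_picardMap_sub hf hy T
    refine continuousOn_tsum (fun n => ContinuousOn.mono ?_ Icc_subset_Ici_self) hu hDu
    simpa only [D, Function.iterate_succ_apply'] using
      continuousOn_picardMap_sub hf.continuous (hP hPy n) (hP hy n)
  refine ⟨x, hx, fun t ht => tendsto_nhds_unique ?_
    (tendsto_picardMap_of_tendstoUniformlyOn hf (fun N => hP hy (N + 1)) hx ht (hunif t))⟩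
  simpa only [Function.comp_def, Function.iterate_succ_apply'] using
    ((hunif t).tendsto_at ⟨ht, le_rfl⟩).comp (tendsto_add_atTop_nat 1)

end Picard

theorem LipschitzOnWith.lipschitzWith_mul_max_neg_sub {g : ℝ → ℝ} {K : ℝ≥0}
    (hg : LipschitzOnWith K g (Ici 0)) (c : ℝ) :
    LipschitzWith (‖c‖₊ + K) fun u => c * max (-u) 0 - g (max u 0) := by
  have hneg : LipschitzWith ‖c‖₊ fun u : ℝ => c * max (-u) 0 := by
    simpa only [mul_one, Function.comp_def, smul_eq_mul, Pi.neg_apply, id] using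
      (lipschitzWith_smul c).comp (LipschitzWith.id.neg.max_const 0)
  have hpos : LipschitzWith K fun u => g (max u 0) := by
    simpa only [mul_one, Function.comp_def, id] using lipschitzOnWith_univ.1
      (hg.comp (LipschitzWith.id.max_const 0).lipschitzOnWith fun u _ => le_max_right u 0)
  exact hneg.sub hpos

theorem stmt_2_general (c : ℝ) (g : ℝ → ℝ)
    (hg_lip : ∃ K : NNReal, LipschitzOnWith K g (Set.Ici 0))
    (y : ℝ → ℝ) (hy : Cadlag y) :
    ∃ x : ℝ → ℝ,
      (Cadlag x ∧ ∀ t, 0 ≤ t →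
        x t = y t + c * (∫ s in (0 : ℝ)..t, max (-(x s)) 0)
              - ∫ s in (0 : ℝ)..t, g (max (x s) 0)) ∧
      ∀ x' : ℝ → ℝ,
        (Cadlag x' ∧ ∀ t, 0 ≤ t →
          x' t = y t + c * (∫ s in (0 : ℝ)..t, max (-(x' s)) 0)
                - ∫ s in (0 : ℝ)..t, g (max (x' s) 0)) →
        ∀ t, 0 ≤ t → x' t = x t := by
  obtain ⟨K, hK⟩ := hg_lip
  set f : ℝ → ℝ := fun u => c * max (-u) 0 - g (max u 0)
  have hf : LipschitzWith (‖c‖₊ + K) f := hK.lipschitzWith_mul_max_neg_sub c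
  have solves_iff (x : ℝ → ℝ) (hx : Cadlag x) (t : ℝ) (ht : 0 ≤ t) :
      (x t = y t + c * (∫ s in (0 : ℝ)..t, max (-(x s)) 0) - ∫ s in (0 : ℝ)..t, g (max (x s) 0))
        ↔ x t = picardMap f y x t := by
    have hneg : IntervalIntegrable (fun s => max (-(x s)) 0) volume 0 t :=
      (hx.comp (continuous_neg.max continuous_const)).intervalIntegrable ht
    have hpos : IntervalIntegrable (fun s => g (max (x s) 0)) volume 0 t :=
      (hx.comp ((hK.continuousOn.comp_continuous (continuous_id.max continuous_const)
        fun u => le_max_right u 0))).intervalIntegrable ht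
    rw [picardMap, intervalIntegral.integral_sub (hneg.const_mul c) hpos,
      intervalIntegral.integral_const_mul, add_sub_assoc]
  obtain ⟨x, hx, hfix⟩ := exists_cadlag_eqOn_picardMap hf hy
  refine ⟨x, ⟨hx, fun t ht => (solves_iff x hx t ht).2 (hfix ht)⟩, fun x' ⟨hx', h'⟩ => ?_⟩
  exact eqOn_of_eqOn_picardMap hf hx' hx (fun t ht => (solves_iff x' hx' t ht).1 (h' t ht)) hfix

/-- For `c > 0`, `g` nondecreasing Lipschitz with `g(0) = 0`, and
`y` càdlàg, there is a unique càdlàg `x` with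
`x(t) = y(t) + c ∫₀ᵗ x(s)⁻ ds − ∫₀ᵗ g(x(s)⁺) ds` for all `t ≥ 0`. -/
theorem stmt_2 (c : ℝ) (hc : 0 < c) (g : ℝ → ℝ)
    (hg_mono : MonotoneOn g (Set.Ici 0))
    (hg_lip : ∃ K : NNReal, LipschitzOnWith K g (Set.Ici 0))
    (hg0 : g 0 = 0)
    (y : ℝ → ℝ) (hy : Cadlag y) :
    ∃ x : ℝ → ℝ,
      (Cadlag x ∧ ∀ t, 0 ≤ t →
        x t = y t + c * (∫ s in (0 : ℝ)..t, max (-(x s)) 0)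
              - ∫ s in (0 : ℝ)..t, g (max (x s) 0)) ∧
      ∀ x' : ℝ → ℝ,
        (Cadlag x' ∧ ∀ t, 0 ≤ t →
          x' t = y t + c * (∫ s in (0 : ℝ)..t, max (-(x' s)) 0)
                - ∫ s in (0 : ℝ)..t, g (max (x' s) 0)) →
        ∀ t, 0 ≤ t → x' t = x t :=
  stmt_2_general c g hg_lip y hy
end

section
/- Let T > 0, let (c_n) be a sequence of positive real numbers, and for each n let x_n : [0,T] → ℝ be càdlàg. Define ℓ_n(t) = c_n ∫_0^t (x_n(s))⁻ ds for t ∈ [0,T]. Suppose x_n converges uniformly on [0,T] to a continuous function x : [0,T] → ℝ with x ≥ 0, and ℓ_n converges pointwise on [0,T] to a right-continuous nondecreasing function ℓ : [0,T] → ℝ. Then ∫_{[0,T]} x dℓ = 0, where the integral is taken with respect to the Lebesgue–Stieltjes measure associated with ℓ. -/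
open Filter MeasureTheory

/-- A function `y : [0,T] → ℝ` (encoded on all of `ℝ`, with only its values on
`[0,T]` relevant) is càdlàg: right-continuous at every `t ∈ [0,T)` and with a
finite left limit at every `t ∈ (0,T]`. -/
def CadlagOn (y : ℝ → ℝ) (T : ℝ) : Prop :=
  (∀ t : ℝ, 0 ≤ t → t < T → ContinuousWithinAt y (Set.Ici t) t) ∧
  (∀ t : ℝ, 0 < t → t ≤ T → ∃ l : ℝ, Tendsto y (nhdsWithin t (Set.Iio t)) (nhds l))

open Set Topology

/-! Wherever `x > 0` on an interval `[a, b] ⊆ [0, T]`, uniform convergence makes `xₙ > 0` there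
for large `n`, so `ℓₙ` is constant on `[a, b]`, and hence so is its limit `ℓ`: the measure `dℓ`
does not charge `(a, b]`. These intervals, together with the point `0` (no atom there since `ℓ`
is constant on `(-∞, 0]`), cover `{x > 0} ∩ [0, T]` locally, so `x = 0` holds `dℓ`-a.e. on
`[0, T]`. -/

theorem TendstoUniformlyOn.eventually_forall_pos {ι α : Type*} [TopologicalSpace α]
    {l : Filter ι} {F : ι → α → ℝ} {f : α → ℝ} {K : Set α} (hF : TendstoUniformlyOn F f l K)
    (hK : IsCompact K) (hf : ContinuousOn f K) (hpos : ∀ y ∈ K, 0 < f y) :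
    ∀ᶠ n in l, ∀ y ∈ K, 0 < F n y := by
  obtain ⟨m, hm, hmf⟩ := hK.exists_forall_le' hf hpos
  filter_upwards [Metric.tendstoUniformlyOn_iff.1 hF m hm] with n hn y hy
  have hclose := hn y hy
  rw [Real.dist_eq, abs_lt] at hclose
  linarith [hmf y hy]

theorem intervalIntegral_eq_of_forall_Ioc_eq_zero {f : ℝ → ℝ} {c a b : ℝ} (hca : c ≤ a)
    (hab : a ≤ b) (hf : ∀ s ∈ Ioc a b, f s = 0) :
    ∫ s in c..b, f s = ∫ s in c..a, f s := by
  rw [intervalIntegral.integral_of_le (hca.trans hab), intervalIntegral.integral_of_le hca]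
  refine setIntegral_eq_of_subset_of_forall_sdiff_eq_zero measurableSet_Ioc
    (Ioc_subset_Ioc_right hab) fun s ⟨hsb, hsa⟩ => hf s ⟨?_, hsb.2⟩
  by_contra! hle
  exact hsa ⟨hsb.1, hle⟩

theorem eq_of_tendsto_integral_negPart {c : ℕ → ℝ} {xs : ℕ → ℝ → ℝ} {x : ℝ → ℝ}
    {a b la lb : ℝ} (ha : 0 ≤ a) (hab : a ≤ b) (hx : ContinuousOn x (Icc a b))
    (hpos : ∀ s ∈ Icc a b, 0 < x s) (hunif : TendstoUniformlyOn xs x atTop (Icc a b))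
    (hla : Tendsto (fun n => c n * ∫ s in (0 : ℝ)..a, max (-(xs n s)) 0) atTop (𝓝 la))
    (hlb : Tendsto (fun n => c n * ∫ s in (0 : ℝ)..b, max (-(xs n s)) 0) atTop (𝓝 lb)) :
    lb = la := by
  refine tendsto_nhds_unique hlb (hla.congr' ?_)
  filter_upwards [hunif.eventually_forall_pos isCompact_Icc hx hpos] with n hn
  rw [intervalIntegral_eq_of_forall_Ioc_eq_zero ha hab fun s hs =>
    max_eq_right (neg_nonpos.2 (hn s (Ioc_subset_Icc_self hs)).le)]

theorem StieltjesFunction.measure_eq_zero_of_const_on_intervals {ℓ : StieltjesFunction ℝ}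
    {U : Set ℝ} {p q : ℝ} (hUpq : U ⊆ Icc p q) (hU : ∀ t ∈ U, U ∈ 𝓝[Icc p q] t)
    (hconst : ∀ a b, a ≤ b → Icc a b ⊆ U → ℓ b = ℓ a) (hp : ℓ.measure {p} = 0) :
    ℓ.measure U = 0 := by
  refine measure_null_of_locally_null U fun t ht => ?_
  obtain ⟨δ, hδ, hball⟩ := Metric.mem_nhdsWithin_iff.1 (hU t ht)
  obtain ⟨hpt, htq⟩ := hUpq ht
  set a := max (t - δ / 2) p
  set b := min (t + δ / 2) q
  have hta : t - δ / 2 ≤ a := le_max_left _ _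
  have hbt : b ≤ t + δ / 2 := min_le_left _ _
  have hIcc : Icc a b ⊆ U := fun s ⟨has, hsb⟩ => hball
    ⟨by rw [Metric.mem_ball, Real.dist_eq, abs_sub_lt_iff]; constructor <;> linarith,
      (le_max_right _ _).trans has, hsb.trans (min_le_right _ _)⟩
  have hnull : ℓ.measure (Ioc a b) = 0 := by
    have hab : a ≤ b := max_le (by linarith) hpt |>.trans (le_min (by linarith) htq)
    rw [ℓ.measure_Ioc, hconst a b hab hIcc, sub_self, ENNReal.ofReal_zero]
  refine ⟨U ∩ Metric.ball t (δ / 2),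
    inter_mem_nhdsWithin U (Metric.ball_mem_nhds t (by positivity)),
    measure_mono_null (fun s ⟨hsU, hst⟩ => ?_) (measure_union_null hp hnull)⟩
  obtain ⟨hps, hsq⟩ := hUpq hsU
  rw [Metric.mem_ball, Real.dist_eq, abs_sub_lt_iff] at hst
  rcases hps.eq_or_lt with rfl | hps
  · exact Or.inl rfl
  · exact Or.inr ⟨max_lt (by linarith) hps, le_min (by linarith) hsq⟩

theorem stmt_6_general (T : ℝ)
    (c : ℕ → ℝ)
    (xs : ℕ → ℝ → ℝ)
    (els : ℕ → ℝ → ℝ)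
    (hels : ∀ n t, t ∈ Set.Icc (0 : ℝ) T →
      els n t = c n * ∫ s in (0 : ℝ)..t, max (-(xs n s)) 0)
    (x : ℝ → ℝ) (hx_cont : ContinuousOn x (Set.Icc 0 T))
    (hx_nonneg : ∀ t ∈ Set.Icc (0 : ℝ) T, 0 ≤ x t)
    (hunif : TendstoUniformlyOn xs x atTop (Set.Icc 0 T))
    (el : StieltjesFunction ℝ)
    (hel0 : ∀ t, t ≤ (0 : ℝ) → el t = el 0)
    (hconv : ∀ t ∈ Set.Icc (0 : ℝ) T, Tendsto (fun n => els n t) atTop (nhds (el t))) :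
    ∫ t in Set.Icc (0 : ℝ) T, x t ∂el.measure = 0 := by
  have hlim : ∀ t ∈ Icc 0 T,
      Tendsto (fun n => c n * ∫ s in (0 : ℝ)..t, max (-(xs n s)) 0) atTop (𝓝 (el t)) :=
    fun t ht => (hconv t ht).congr fun n => hels n t ht
  have hatom : el.measure {0} = 0 := by
    have hcont : ContinuousWithinAt el (Iic 0) 0 :=
      continuousWithinAt_const.congr (fun t ht => hel0 t ht) rfl
    rw [el.measure_singleton, hcont.leftLim_eq, sub_self, ENNReal.ofReal_zero]
  have hpos_null : el.measure {t ∈ Icc 0 T | 0 < x t} = 0 := by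
    refine StieltjesFunction.measure_eq_zero_of_const_on_intervals (fun t ht => ht.1)
      (fun t ⟨ht, hxt⟩ => inter_mem self_mem_nhdsWithin (hx_cont t ht (Ioi_mem_nhds hxt)))
      (fun a b hab hU => ?_) hatom
    have hsub : Icc a b ⊆ Icc 0 T := fun s hs => (hU hs).1
    exact eq_of_tendsto_integral_negPart (hsub (left_mem_Icc.2 hab)).1 hab (hx_cont.mono hsub)
      (fun s hs => (hU hs).2)
      (hunif.mono hsub) (hlim a (hsub (left_mem_Icc.2 hab))) (hlim b (hsub (right_mem_Icc.2 hab)))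
  have hae : x =ᵐ[el.measure.restrict (Icc 0 T)] fun _ => 0 := by
    refine (ae_restrict_iff' measurableSet_Icc).2 (measure_mono_null (fun t ht => ?_) hpos_null)
    obtain ⟨htT, hxt⟩ := Classical.not_imp.1 ht
    exact ⟨htT, (hx_nonneg t htT).lt_of_ne' hxt⟩
  rw [integral_congr_ae hae, integral_zero]

/-- If `xₙ → x` uniformly on `[0,T]` with `x` continuous and
nonnegative, and `ℓₙ(t) = cₙ ∫₀ᵗ (xₙ(s))⁻ ds` converges pointwise on `[0,T]` to a
right-continuous nondecreasing `ℓ` (encoded as a Stieltjes function, constant on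
`(-∞,0]` so that its Lebesgue–Stieltjes measure puts no mass below or at `0`
coming from outside `[0,T]`), then `∫_{[0,T]} x dℓ = 0`. -/
theorem stmt_6 (T : ℝ) (hT : 0 < T)
    (c : ℕ → ℝ) (hc : ∀ n, 0 < c n)
    (xs : ℕ → ℝ → ℝ) (hxs : ∀ n, CadlagOn (xs n) T)
    (els : ℕ → ℝ → ℝ)
    (hels : ∀ n t, t ∈ Set.Icc (0 : ℝ) T →
      els n t = c n * ∫ s in (0 : ℝ)..t, max (-(xs n s)) 0)
    (x : ℝ → ℝ) (hx_cont : ContinuousOn x (Set.Icc 0 T))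
    (hx_nonneg : ∀ t ∈ Set.Icc (0 : ℝ) T, 0 ≤ x t)
    (hunif : TendstoUniformlyOn xs x atTop (Set.Icc 0 T))
    (el : StieltjesFunction ℝ)
    (hel0 : ∀ t, t ≤ (0 : ℝ) → el t = el 0)
    (hconv : ∀ t ∈ Set.Icc (0 : ℝ) T, Tendsto (fun n => els n t) atTop (nhds (el t))) :
    ∫ t in Set.Icc (0 : ℝ) T, x t ∂el.measure = 0 :=
  stmt_6_general T c xs els hels x hx_cont hx_nonneg hunif el hel0 hconv
end
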